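/- Let A be an artin algebra, P an indecomposable module that is both projective and injective with ℓ(P) ≥ 2, and rad P its radical. Then there is a short exact sequence 0 → rad P → P ⊕ (rad P / soc P) → P / soc P → 0, where the left map is (inclusion, projection) and the right map is induced by the projections. (Here soc P ⊆ rad P since P is not simple.) -/

import Mathlib

section
variable (A : Type*) [Ring A] (P : Type*) [AddCommGroup P] [Module A P]

/-- The radical of a module: the intersection of its maximal submodules. -/
def modRad : Submodule A P := sInf {m : Submodule A P | IsCoatom m}

/-- The socle of a module: the sum of its simple submodules. -/
def modSoc : Submodule A P := sSup {m : Submodule A P | IsAtom m}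

/-- A module is indecomposable if it is nonzero and is not the internal direct
sum of two nonzero submodules. -/
def Indecomposable' : Prop :=
  Nontrivial P ∧ ∀ N₁ N₂ : Submodule A P, IsCompl N₁ N₂ → N₁ = ⊥ ∨ N₂ = ⊥

/-- The composition length of a module, realized as the Krull dimension of its
submodule lattice. -/
noncomputable def compLength : WithBot ℕ∞ := Order.krullDim (Submodule A P)

end

/-!
The sequence is the one attached to any pair of submodules `N ≤ M` of a module `P`: it expresses
that the square `M → P → P/N`, `M → M/N → P/N` is a pullback. The only nontrivial point is
exactness in the middle: if `p ≡ y (mod N)` with `y ∈ M`, then `p ∈ M` because `N ≤ M`.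
-/

namespace Submodule

variable {R P : Type*} [Ring R] [AddCommGroup P] [Module R P] {N M : Submodule R P}

theorem injective_subtype_prod (S : Submodule R M) :
    Function.Injective (M.subtype.prod S.mkQ) := fun _ _ h =>
  M.injective_subtype (congrArg Prod.fst h)

theorem surjective_mkQ_comp_fst_sub {Q : Type*} [AddCommGroup Q] [Module R Q]
    (g : Q →ₗ[R] P ⧸ N) :
    Function.Surjective (N.mkQ ∘ₗ LinearMap.fst R P Q - g ∘ₗ LinearMap.snd R P Q) := by
  intro z
  obtain ⟨p, rfl⟩ := N.mkQ_surjective z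
  exact ⟨(p, 0), by simp⟩

theorem range_subtype_prod_eq_ker (hNM : N ≤ M) :
    LinearMap.range (M.subtype.prod (N.comap M.subtype).mkQ) =
      LinearMap.ker (N.mkQ ∘ₗ LinearMap.fst R P _ -
        (N.comap M.subtype).mapQ N M.subtype le_rfl ∘ₗ LinearMap.snd R P _) := by
  ext ⟨p, q⟩
  obtain ⟨y, rfl⟩ := (N.comap M.subtype).mkQ_surjective q
  simp only [LinearMap.mem_range, LinearMap.mem_ker, LinearMap.sub_apply, LinearMap.comp_apply,
    LinearMap.fst_apply, LinearMap.snd_apply, mkQ_apply, mapQ_apply, sub_eq_zero,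
    Quotient.eq, LinearMap.prod_apply, Prod.ext_iff, Function.prod, subtype_apply, mem_comap]
  constructor
  · rintro ⟨x, rfl, hxy⟩
    simpa using hxy
  · intro hpy
    exact ⟨⟨p, (M.sub_mem_iff_left y.2).1 (hNM hpy)⟩, rfl, hpy⟩

end Submodule

/-- Let `A` be an artin algebra and `P` an indecomposable projective-injective
module with `ℓ(P) ≥ 2`, so that `soc P ⊆ rad P`.  Then the canonical sequence
`0 → rad P → P ⊕ (rad P / soc P) → P / soc P → 0`, whose left map is
(inclusion, projection) and whose right map is induced by the projections,
is exact. -/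
theorem rad_soc_canonical_sequence_exact
    (A : Type*) [Ring A]
    (P : Type*) [AddCommGroup P] [Module A P]
    (hsub : modSoc A P ≤ modRad A P) :
    let S : Submodule A ↥(modRad A P) := (modSoc A P).comap (modRad A P).subtype
    let l : ↥(modRad A P) →ₗ[A] P × (↥(modRad A P) ⧸ S) :=
      LinearMap.prod (modRad A P).subtype S.mkQ
    let m : (↥(modRad A P) ⧸ S) →ₗ[A] (P ⧸ modSoc A P) :=
      S.liftQ ((modSoc A P).mkQ.comp (modRad A P).subtype)
        (fun x hx => by
          simpa [LinearMap.mem_ker, Submodule.Quotient.mk_eq_zero] using (show (x : P) ∈ modSoc A P from hx))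
    let r : (P × (↥(modRad A P) ⧸ S)) →ₗ[A] (P ⧸ modSoc A P) :=
      (modSoc A P).mkQ.comp (LinearMap.fst A P (↥(modRad A P) ⧸ S)) -
        m.comp (LinearMap.snd A P (↥(modRad A P) ⧸ S))
    Function.Injective l ∧ Function.Surjective r ∧
      LinearMap.range l = LinearMap.ker r := by
  intro S l m r
  exact ⟨Submodule.injective_subtype_prod S, Submodule.surjective_mkQ_comp_fst_sub m,
    Submodule.range_subtype_prod_eq_ker hsub⟩
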